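/- Let f be a real additive function such that Σ_{p : f(p)≠0} 1/p < ∞. Then, for x ≥ 2 and all sufficiently large T ≥ 2, one has Σ_{m > √x} u_f(m)/m ≪ x^{−2/log T}·log T + α_f(T) + 1/T, where the implied constant may depend on f; in particular, choosing T := x^{1/log₂x}, the left-hand side is ≪ α_f(x^{1/log₂x}) + 1/(log x)^{1/6} + 1/x^{c} for some absolute c > 0 when x is large. -/

import Mathlib

open Filter Topology Finset MeasureTheory
open scoped Classical

noncomputable section

/-- A real additive arithmetic function. -/
def IsAdditive (f : ℕ → ℝ) : Prop :=
  ∀ m n : ℕ, 0 < m → 0 < n → Nat.Coprime m n → f (m * n) = f m + f n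

/-- A real strongly additive arithmetic function. -/
def IsStronglyAdditive (f : ℕ → ℝ) : Prop :=
  IsAdditive f ∧ ∀ p ν : ℕ, p.Prime → 1 ≤ ν → f (p ^ ν) = f p

/-- Convergence of the two Erdős–Wintner series. -/
def EWConv (f : ℕ → ℝ) : Prop :=
  Summable (fun p : Nat.Primes => min 1 (f p ^ 2) / (p : ℝ)) ∧
  ∃ ℓ : ℝ, Tendsto (fun N : ℕ =>
      ∑ p ∈ (Finset.range N).filter (fun p => Nat.Prime p ∧ |f p| ≤ 1), f p / (p : ℝ))
    atTop (𝓝 ℓ)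

/-- The series over primes with f(p) ≠ 0 of 1/p. -/
def DivergentCase (f : ℕ → ℝ) : Prop :=
  ¬ Summable (fun p : Nat.Primes => if f (p : ℕ) ≠ 0 then (1 : ℝ) / (p : ℕ) else 0)

def EtaBound (f : ℕ → ℝ) (η : ℝ → ℝ) : Prop :=
  Continuous η ∧ Antitone η ∧ Tendsto η atTop (𝓝 0) ∧
  (∀ y : ℝ, 1 ≤ y → ∃ ℓ : ℝ,
    Tendsto (fun N : ℕ =>
        ∑ p ∈ (Finset.range N).filter (fun p => Nat.Prime p ∧ y < (p : ℝ) ∧ |f p| ≤ 1),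
          f p / (p : ℝ)) atTop (𝓝 ℓ) ∧ |ℓ| ≤ η y) ∧
  (∀ y : ℝ, 1 ≤ y →
    (∑' n : ℕ, if IsPrimePow n ∧ y < (n : ℝ) then min 1 (f n ^ 2) / (n : ℝ) else 0) ≤ η y)

/-- The truncated additive function f_R. -/
def fR (f : ℕ → ℝ) (R : ℝ) (n : ℕ) : ℝ :=
  ∑ p ∈ n.primeFactors,
    (if ((p ^ (n.factorization p) : ℕ) : ℝ) ≤ R ∨ |f (p ^ (n.factorization p))| ≤ 1
      then f (p ^ (n.factorization p)) else 0)

/-- B_f(v) := sqrt(2 + Σ_{p^ν ≤ v} f(p^ν)²/p^ν). -/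
def Bf (f : ℕ → ℝ) (v : ℝ) : ℝ :=
  Real.sqrt (2 + ∑ n ∈ (Finset.Icc 2 ⌊v⌋₊).filter IsPrimePow, f n ^ 2 / (n : ℝ))

/-- π_k(x) = #{n ≤ x : ω(n) = k}. -/
def pik (x : ℝ) (k : ℕ) : ℕ :=
  ((Finset.Icc 1 ⌊x⌋₊).filter (fun n => n.primeFactors.card = k)).card

/-- The empirical distribution function. -/
def Fx (f : ℕ → ℝ) (x : ℝ) (y : ℝ) : ℝ :=
  (((Finset.Icc 1 ⌊x⌋₊).filter (fun n => f n ≤ y)).card : ℝ) / x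

def uf (f : ℕ → ℝ) (m : ℕ) : ℝ :=
  if ∀ p ∈ m.primeFactors, f (p ^ (m.factorization p)) ≠ 0 then 1 else 0

def vf (f : ℕ → ℝ) (d : ℕ) : ℝ :=
  if ∀ p ∈ d.primeFactors, f (p ^ (d.factorization p)) = 0 then 1 else 0

def wp (f : ℕ → ℝ) (p : ℕ) : ℝ :=
  (1 - 1 / (p : ℝ)) * ∑' ν : ℕ, uf f (p ^ (ν + 1)) / (p : ℝ) ^ (ν + 1)

def hf (f : ℕ → ℝ) (m : ℕ) : ℝ :=
  uf f m * ∏ p ∈ m.primeFactors, (1 - 1 / (p : ℝ)) / (1 - wp f p)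

def alphaf (f : ℕ → ℝ) (y : ℝ) : ℝ :=
  ∑' p : Nat.Primes, if y < ((p : ℕ) : ℝ) then uf f (p : ℕ) / ((p : ℕ) : ℝ) else 0

def betaf (f : ℕ → ℝ) (y : ℝ) : ℝ :=
  (1 / Real.log y) * ∫ t in (1:ℝ)..y, alphaf f t / t

def Flim (f : ℕ → ℝ) (y : ℝ) : ℝ :=
  (∏' p : Nat.Primes, (1 - wp f (p : ℕ))) *
    ∑' m : ℕ, if 1 ≤ m ∧ f m ≤ y then hf f m / m else 0

/-!
Put `g(m) = u_f(m)/m`: a nonnegative multiplicative function with `g(p^k) ≤ p^{-k}` whose prime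
sum `Σ_p g(p)` converges, so that all its Euler products over smooth numbers are bounded and `g`
is summable. Split the integers `m > √x` into `T`-smooth and `T`-rough ones. For smooth `m`,
Rankin's trick gives `g(m) ≤ x^{-2/log T} g(m) m^{4/log T}`, and the Euler product of this
weight is `O(1)` because `p^{4/log T} ≤ e^4` for `p ≤ T`. A rough `m` has a prime factor
`p > T`; writing `m = p^k n` with `p ∤ n` bounds their contribution by
`Σ_{p>T} (g(p) + 4/p²) Σ_n g(n) ≪ α_f(T) + 1/T`. Finally `T = x^{1/log₂ x}` has
`log T = log x / log₂ x`, which turns `x^{-2/log T} log T` into `1/(log x · log₂ x)`.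
-/

open Real

lemma uf_eq_prod_factorization (f : ℕ → ℝ) (m : ℕ) :
    uf f m = m.factorization.prod fun p k => if f (p ^ k) ≠ 0 then 1 else 0 := by
  rw [uf, Finsupp.prod, Nat.support_factorization, Finset.prod_boole]

lemma uf_mul (f : ℕ → ℝ) {m n : ℕ} (h : m.Coprime n) : uf f (m * n) = uf f m * uf f n := by
  simp only [uf_eq_prod_factorization, Nat.factorization_mul_of_coprime h]
  exact Finsupp.prod_add_index_of_disjoint (by simpa using h.disjoint_primeFactors) _

lemma uf_nonneg (f : ℕ → ℝ) (m : ℕ) : 0 ≤ uf f m := by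
  unfold uf; split_ifs <;> norm_num

lemma uf_le_one (f : ℕ → ℝ) (m : ℕ) : uf f m ≤ 1 := by
  unfold uf; split_ifs <;> norm_num

lemma uf_prime (f : ℕ → ℝ) {p : ℕ} (hp : p.Prime) : uf f p = if f p ≠ 0 then 1 else 0 := by
  simp [uf, hp.primeFactors, hp.factorization_self]

lemma summable_and_tsum_le_of_le_geometric {h : ℕ → ℝ} {r : ℝ} (hr : r ≤ 3 / 4)
    (h0 : ∀ k, 0 ≤ h k) (hle : ∀ k, h k ≤ r ^ k) :
    Summable h ∧ ∑' k, h k ≤ h 0 + h 1 + 4 * r ^ 2 := by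
  have hr0 : 0 ≤ r := by simpa using (h0 1).trans (hle 1)
  have hgeom := summable_geometric_of_lt_one hr0 (by linarith)
  have hh : Summable h := .of_nonneg_of_le h0 hle hgeom
  have htail : ∑' k, h (k + 2) ≤ 4 * r ^ 2 := calc
    ∑' k, h (k + 2) ≤ ∑' k, r ^ 2 * r ^ k :=
      Summable.tsum_le_tsum (fun k => by rw [← pow_add, add_comm]; exact hle _)
        ((summable_nat_add_iff 2).2 hh) (hgeom.mul_left _)
    _ = r ^ 2 * (1 - r)⁻¹ := by rw [tsum_mul_left, tsum_geometric_of_lt_one hr0 (by linarith)]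
    _ ≤ r ^ 2 * 4 := by
      gcongr
      rw [inv_le_comm₀ (by linarith) (by norm_num)]
      linarith
    _ = 4 * r ^ 2 := mul_comm _ _
  refine ⟨hh, ?_⟩
  rw [← hh.sum_add_tsum_nat_add 2, Finset.sum_range_succ, Finset.sum_range_one]
  linarith

lemma sum_le_of_le_geometric {h : ℕ → ℝ} {r : ℝ} (hr : r ≤ 3 / 4) (h0 : ∀ k, 0 ≤ h k)
    (hle : ∀ k, h k ≤ r ^ k) {s : Finset ℕ} (hs : 0 ∉ s) : ∑ k ∈ s, h k ≤ h 1 + 4 * r ^ 2 := by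
  obtain ⟨hh, hbound⟩ := summable_and_tsum_le_of_le_geometric hr h0 hle
  have := hh.sum_le_tsum (insert 0 s) fun k _ => h0 k
  rw [Finset.sum_insert hs] at this
  linarith

lemma sum_inv_sq_le_of_lt {k : ℕ} {P : Finset ℕ} (hP : ∀ p ∈ P, k < p) :
    ∑ p ∈ P, ((p : ℝ) ^ 2)⁻¹ ≤ 2 / (k + 1) :=
  (Finset.sum_le_sum_of_subset_of_nonneg (t := Finset.Ioo k (P.sup id + 1))
    (fun p hp => Finset.mem_Ioo.2 ⟨hP p hp, Nat.lt_succ_of_le (Finset.le_sup (f := id) hp)⟩)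
    (fun _ _ _ => by positivity)).trans (sum_Ioo_inv_sq_le k _)

lemma sum_le_sum_sum_filter_dvd {s P : Finset ℕ} {h : ℕ → ℝ} (h0 : ∀ m, 0 ≤ h m)
    (hcover : ∀ m ∈ s, h m ≠ 0 → ∃ p ∈ P, p ∣ m) :
    ∑ m ∈ s, h m ≤ ∑ p ∈ P, ∑ m ∈ s with p ∣ m, h m := by
  simp only [Finset.sum_filter]
  rw [Finset.sum_comm]
  refine Finset.sum_le_sum fun m hm => ?_
  have hterm (p : ℕ) : 0 ≤ if p ∣ m then h m else 0 := by split_ifs <;> simp [h0]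
  by_cases hm0 : h m = 0
  · exact hm0 ▸ Finset.sum_nonneg fun p _ => hterm p
  obtain ⟨p, hp, hpm⟩ := hcover m hm hm0
  exact (if_pos hpm).symm.le.trans (Finset.single_le_sum (fun q _ => hterm q) hp)

lemma exists_prime_dvd_lt_of_notMem_smoothNumbers {T : ℝ} (hT : 0 ≤ T) {m : ℕ}
    (hm : m ∉ (⌊T⌋₊ + 1).smoothNumbers) : ∃ p, p.Prime ∧ p ∣ m ∧ T < p := by
  simp only [Nat.mem_smoothNumbers', not_forall, not_lt] at hm
  obtain ⟨p, hp, hpm, hTp⟩ := hm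
  exact ⟨p, hp, hpm, (Nat.floor_lt hT).1 hTp⟩

lemma rpow_mul_inv_le_three_quarters {p δ : ℝ} (hp : 2 ≤ p) (hδ : δ ≤ 1 / 2) :
    p ^ δ * p⁻¹ ≤ 3 / 4 := by
  have hsqrt : p ^ δ ≤ √p :=
    (rpow_le_rpow_of_exponent_le (by linarith) hδ).trans_eq (sqrt_eq_rpow _).symm
  have hsq : (p ^ δ * p⁻¹) ^ 2 ≤ 1 / 2 := calc
    (p ^ δ * p⁻¹) ^ 2 ≤ (√p * p⁻¹) ^ 2 := by gcongr
    _ = p⁻¹ := by rw [mul_pow, sq_sqrt (by positivity)]; field_simp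
    _ ≤ 1 / 2 := by rw [inv_le_comm₀ (by positivity) (by norm_num)]; linarith
  nlinarith [show 0 ≤ p ^ δ * p⁻¹ by positivity]

lemma one_le_rpow_neg_mul_rpow_of_sqrt_lt {x y δ : ℝ} (hx : 0 < x) (hδ : 0 ≤ δ) (hy : √x < y) :
    1 ≤ x ^ (-(δ / 2)) * y ^ δ := by
  rw [rpow_neg hx.le, inv_mul_eq_div, one_le_div (rpow_pos_of_pos hx _)]
  calc x ^ (δ / 2) = √x ^ δ := by rw [sqrt_eq_rpow, ← rpow_mul hx.le]; ring_nf
    _ ≤ y ^ δ := rpow_le_rpow (sqrt_nonneg x) hy.le hδ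

lemma rpow_div_log_le_exp {p T c : ℝ} (hp : 0 < p) (hpT : p ≤ T) (hT : 1 < T) (hc : 0 ≤ c) :
    p ^ (c / log T) ≤ exp c := by
  rw [rpow_def_of_pos hp, exp_le_exp, mul_div_assoc', div_le_iff₀ (log_pos hT), mul_comm]
  exact mul_le_mul_of_nonneg_left (log_le_log hp hpT) hc

/-- `α_g(T) = Σ_{p > T} g(p)`, so that `alphaf f = primeTail (fun m => uf f m / m)`;
`primeTail g 0` is the full prime sum `Σ_p g(p)`. -/
def primeTail (g : ℕ → ℝ) (T : ℝ) : ℝ :=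
  ∑' p : Nat.Primes, if T < ((p : ℕ) : ℝ) then g p else 0

section Multiplicative

variable {g : ℕ → ℝ} (hg0 : ∀ m, 0 ≤ g m) (hg₁ : g 1 = 1)
  (hmul : ∀ {m n : ℕ}, m.Coprime n → g (m * n) = g m * g n) (hle : ∀ m : ℕ, g m ≤ (m : ℝ)⁻¹)
  (hprimes : Summable fun p : Nat.Primes => g p)

include hg0 hle in
lemma apply_zero_of_le_inv : g 0 = 0 := le_antisymm (by simpa using hle 0) (hg0 0)

include hg0 hprimes in
lemma sum_le_primeTail {T : ℝ} {P : Finset ℕ} (hP : ∀ p ∈ P, p.Prime ∧ T < p) :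
    ∑ p ∈ P, g p ≤ primeTail g T := by
  have hterm (p : Nat.Primes) : 0 ≤ (if T < ((p : ℕ) : ℝ) then g p else 0) := by
    split_ifs <;> simp [hg0]
  have hsum : Summable fun p : Nat.Primes => if T < ((p : ℕ) : ℝ) then g p else 0 :=
    hprimes.of_nonneg_of_le hterm fun p => by split_ifs <;> simp [hg0]
  calc ∑ p ∈ P, g p = ∑ p ∈ (P.subtype Nat.Prime : Finset Nat.Primes),
        if T < ((p : ℕ) : ℝ) then g p else 0 := by
        rw [Finset.sum_subtype_eq_sum_filter (fun p : ℕ => if T < (p : ℝ) then g p else 0),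
          Finset.filter_true_of_mem fun p hp => (hP p hp).1]
        exact Finset.sum_congr rfl fun p hp => (if_pos (hP p hp).2).symm
    _ ≤ primeTail g T := Summable.sum_le_tsum (L := .unconditional _) _ (fun p _ => hterm p) hsum

include hg0 hprimes in
lemma sum_primesBelow_rankin_le {δ K : ℝ} (hK : 0 ≤ K) {N : ℕ}
    (hpK : ∀ p ∈ N.primesBelow, (p : ℝ) ^ δ ≤ K) :
    ∑ p ∈ N.primesBelow, (g p * (p : ℝ) ^ δ + 4 * ((p : ℝ) ^ δ * (p : ℝ)⁻¹) ^ 2) ≤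
      K * primeTail g 0 + 4 * K ^ 2 := by
  have hprime (p : ℕ) (hp : p ∈ N.primesBelow) := Nat.prime_of_mem_primesBelow hp
  have hfirst : ∑ p ∈ N.primesBelow, g p * (p : ℝ) ^ δ ≤ K * primeTail g 0 := calc
    ∑ p ∈ N.primesBelow, g p * (p : ℝ) ^ δ ≤ ∑ p ∈ N.primesBelow, K * g p :=
      Finset.sum_le_sum fun p hp => by
        rw [mul_comm K]; exact mul_le_mul_of_nonneg_left (hpK p hp) (hg0 p)
    _ = K * ∑ p ∈ N.primesBelow, g p := (Finset.mul_sum _ _ _).symm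
    _ ≤ K * primeTail g 0 := mul_le_mul_of_nonneg_left (sum_le_primeTail hg0 hprimes
        fun p hp => ⟨hprime p hp, by exact_mod_cast (hprime p hp).pos⟩) hK
  have hsecond : ∑ p ∈ N.primesBelow, 4 * ((p : ℝ) ^ δ * (p : ℝ)⁻¹) ^ 2 ≤ 4 * K ^ 2 := calc
    ∑ p ∈ N.primesBelow, 4 * ((p : ℝ) ^ δ * (p : ℝ)⁻¹) ^ 2
        ≤ ∑ p ∈ N.primesBelow, 4 * K ^ 2 * ((p : ℝ) ^ 2)⁻¹ :=
      Finset.sum_le_sum fun p hp => by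
        rw [mul_pow, inv_pow, ← mul_assoc]
        gcongr
        exact hpK p hp
    _ = 4 * K ^ 2 * ∑ p ∈ N.primesBelow, ((p : ℝ) ^ 2)⁻¹ := (Finset.mul_sum _ _ _).symm
    _ ≤ 4 * K ^ 2 * (2 / ((1 : ℕ) + 1)) := by
      gcongr
      exact sum_inv_sq_le_of_lt fun p hp => (hprime p hp).one_lt
    _ = 4 * K ^ 2 := by norm_num
  rw [Finset.sum_add_distrib]
  linarith

include hg0 hg₁ hmul in
lemma summable_and_tsum_smoothNumbers_le {r : ℕ → ℝ} (hr : ∀ p, p.Prime → r p ≤ 3 / 4)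
    (hpow : ∀ p k, p.Prime → g (p ^ k) ≤ r p ^ k) (N : ℕ) :
    Summable (fun m : N.smoothNumbers => g m) ∧
      ∑' m : N.smoothNumbers, g m ≤ exp (∑ p ∈ N.primesBelow, (g p + 4 * r p ^ 2)) := by
  have hlocal (p : ℕ) (hp : p.Prime) :=
    summable_and_tsum_le_of_le_geometric (hr p hp) (fun k => hg0 (p ^ k)) (hpow p · hp)
  obtain ⟨hsum, hprod⟩ := EulerProduct.summable_and_hasSum_smoothNumbers_prod_primesBelow_tsum
    hg₁ hmul (fun hp => by simpa [Real.norm_eq_abs] using (hlocal _ hp).1.abs) N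
  refine ⟨by simpa [Real.norm_eq_abs, abs_of_nonneg (hg0 _)] using hsum, ?_⟩
  rw [hprod.tsum_eq, exp_sum]
  refine Finset.prod_le_prod (fun p _ => tsum_nonneg fun k => hg0 _) fun p hp => ?_
  have := (hlocal p (Nat.prime_of_mem_primesBelow hp)).2
  simp only [pow_zero, pow_one, hg₁] at this
  linarith [add_one_le_exp (g p + 4 * r p ^ 2)]

include hg0 hg₁ hmul hle hprimes in
lemma summable_and_tsum_smoothNumbers_mul_rpow_le {δ K : ℝ} (hδ : δ ≤ 1 / 2) (hK : 0 ≤ K)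
    {N : ℕ} (hpK : ∀ p ∈ N.primesBelow, (p : ℝ) ^ δ ≤ K) :
    Summable (fun m : N.smoothNumbers => g m * (m : ℝ) ^ δ) ∧
      ∑' m : N.smoothNumbers, g m * (m : ℝ) ^ δ ≤ exp (K * primeTail g 0 + 4 * K ^ 2) := by
  have hpow (p k : ℕ) (hp : p.Prime) :
      g (p ^ k) * ((p ^ k : ℕ) : ℝ) ^ δ ≤ ((p : ℝ) ^ δ * (p : ℝ)⁻¹) ^ k := by
    rw [mul_pow, Nat.cast_pow, ← rpow_pow_comm (Nat.cast_nonneg _), mul_comm]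
    exact mul_le_mul_of_nonneg_left (by simpa using hle (p ^ k)) (by positivity)
  have hwmul {m n : ℕ} (h : m.Coprime n) :
      g (m * n) * ((m * n : ℕ) : ℝ) ^ δ = g m * (m : ℝ) ^ δ * (g n * (n : ℝ) ^ δ) := by
    rw [hmul h, Nat.cast_mul, mul_rpow (Nat.cast_nonneg _) (Nat.cast_nonneg _)]
    ring
  obtain ⟨hsumN, hboundN⟩ := summable_and_tsum_smoothNumbers_le
    (fun m => mul_nonneg (hg0 m) (rpow_nonneg (Nat.cast_nonneg m) δ)) (by simp [hg₁]) hwmul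
    (fun p hp => rpow_mul_inv_le_three_quarters (by exact_mod_cast hp.two_le) hδ) hpow N
  exact ⟨hsumN, hboundN.trans (exp_le_exp.2 (sum_primesBelow_rankin_le hg0 hprimes hK hpK))⟩

include hg0 hg₁ hmul hle hprimes in
lemma summable_of_le_inv : Summable g := by
  refine summable_of_sum_le (c := exp (1 * primeTail g 0 + 4 * 1 ^ 2)) hg0 fun u => ?_
  set N := u.sup id + 1
  obtain ⟨hsumN, hboundN⟩ := summable_and_tsum_smoothNumbers_mul_rpow_le hg0 hg₁ hmul hle hprimes
    (δ := 0) (by norm_num) zero_le_one (N := N) fun p _ => by simp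
  simp only [rpow_zero, mul_one] at hsumN hboundN
  calc ∑ m ∈ u, g m = ∑ m ∈ u, (N.smoothNumbers : Set ℕ).indicator g m :=
        Finset.sum_congr rfl fun m hm => by
          rcases Nat.eq_zero_or_pos m with rfl | hm0
          · simp [apply_zero_of_le_inv hg0 hle, Set.indicator_apply]
          · exact (Set.indicator_of_mem (Nat.mem_smoothNumbers_of_lt hm0
              (Nat.lt_succ_of_le (Finset.le_sup (f := id) hm))) g).symm
    _ ≤ ∑' m, (N.smoothNumbers : Set ℕ).indicator g m :=
        (summable_subtype_iff_indicator.1 hsumN).sum_le_tsum _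
          fun m _ => Set.indicator_nonneg (fun m _ => hg0 m) m
    _ = ∑' m : N.smoothNumbers, g m := (_root_.tsum_subtype _ _).symm
    _ ≤ exp (1 * primeTail g 0 + 4 * 1 ^ 2) := hboundN

include hg0 hmul hle in
lemma sum_dvd_le (hg : Summable g) {p : ℕ} (hp : p.Prime) {D : Finset ℕ}
    (hD : ∀ m ∈ D, m ≠ 0 ∧ p ∣ m) :
    ∑ m ∈ D, g m ≤ (g p + 4 * ((p : ℝ) ^ 2)⁻¹) * ∑' m, g m := by
  set v : ℕ → ℕ := fun m => m.factorization p
  set c : ℕ → ℕ := fun m => m / p ^ m.factorization p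
  have hsplit (m : ℕ) (hm : m ∈ D) : g m = g (p ^ v m) * g (c m) := by
    rw [← hmul ((Nat.coprime_ordCompl hp (hD m hm).1).pow_left _),
      Nat.ordProj_mul_ordCompl_eq_self]
  have hinj : Set.InjOn (fun m => (v m, c m)) D := fun m₁ _ m₂ _ h => by
    rw [← Nat.ordProj_mul_ordCompl_eq_self m₁ p, ← Nat.ordProj_mul_ordCompl_eq_self m₂ p]
    simp only [Prod.ext_iff] at h
    exact congrArg₂ (p ^ · * ·) h.1 h.2
  have hv : 0 ∉ D.image v := by
    simp only [Finset.mem_image, not_exists, not_and]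
    exact fun m hm => (hp.factorization_pos_of_dvd (hD m hm).1 (hD m hm).2).ne'
  have hp2 : (2 : ℝ) ≤ p := by exact_mod_cast hp.two_le
  have hpowers : ∑ k ∈ D.image v, g (p ^ k) ≤ g p + 4 * ((p : ℝ) ^ 2)⁻¹ := by
    simpa [inv_pow] using sum_le_of_le_geometric (r := (p : ℝ)⁻¹)
      (by rw [inv_le_comm₀ (by positivity) (by norm_num)]; linarith) (fun k => hg0 (p ^ k))
      (fun k => by simpa using hle (p ^ k)) hv
  calc ∑ m ∈ D, g m = ∑ m ∈ D, g (p ^ v m) * g (c m) := Finset.sum_congr rfl hsplit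
    _ = ∑ q ∈ D.image fun m => (v m, c m), g (p ^ q.1) * g q.2 :=
        (Finset.sum_image (f := fun q => g (p ^ q.1) * g q.2) hinj).symm
    _ ≤ ∑ q ∈ D.image v ×ˢ D.image c, g (p ^ q.1) * g q.2 := by
        refine Finset.sum_le_sum_of_subset_of_nonneg (fun q hq => ?_)
          fun q _ _ => mul_nonneg (hg0 _) (hg0 _)
        obtain ⟨m, hm, rfl⟩ := Finset.mem_image.1 hq
        exact Finset.mem_product.2 ⟨Finset.mem_image_of_mem _ hm, Finset.mem_image_of_mem _ hm⟩
    _ = (∑ k ∈ D.image v, g (p ^ k)) * ∑ n ∈ D.image c, g n := by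
        rw [Finset.sum_product, Finset.sum_mul_sum]
    _ ≤ (g p + 4 * ((p : ℝ) ^ 2)⁻¹) * ∑' m, g m :=
        mul_le_mul hpowers (hg.sum_le_tsum _ fun m _ => hg0 m)
          (Finset.sum_nonneg fun m _ => hg0 m) (by positivity [hg0 p])

include hg0 hmul hle hprimes in
lemma tsum_indicator_compl_smoothNumbers_le (hg : Summable g) {T : ℝ} (hT : 0 < T) :
    ∑' m, ((⌊T⌋₊ + 1).smoothNumbers)ᶜ.indicator g m ≤ (primeTail g T + 8 / T) * ∑' m, g m := by
  set S := (⌊T⌋₊ + 1).smoothNumbers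
  refine (hg.indicator _).tsum_le_of_sum_le fun s => ?_
  set P := (s.biUnion Nat.primeFactors).filter fun p : ℕ => T < p
  have hPprime (p : ℕ) (hp : p ∈ P) : p.Prime ∧ T < p := by
    obtain ⟨hp, hTp⟩ := Finset.mem_filter.1 hp
    obtain ⟨m, -, hpm⟩ := Finset.mem_biUnion.1 hp
    exact ⟨Nat.prime_of_mem_primeFactors hpm, hTp⟩
  have hcover (m : ℕ) (hm : m ∈ s.erase 0) (hgm : Sᶜ.indicator g m ≠ 0) : ∃ p ∈ P, p ∣ m := by
    obtain ⟨q, hq, hqm, hTq⟩ := exists_prime_dvd_lt_of_notMem_smoothNumbers hT.le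
      fun hmS => hgm (Set.indicator_of_notMem (not_not.2 hmS) _)
    exact ⟨q, Finset.mem_filter.2 ⟨Finset.mem_biUnion.2 ⟨m, Finset.mem_of_mem_erase hm,
      Nat.mem_primeFactors.2 ⟨hq, hqm, Finset.ne_of_mem_erase hm⟩⟩, hTq⟩, hqm⟩
  have hinvsq : ∑ p ∈ P, ((p : ℝ) ^ 2)⁻¹ ≤ 2 / T :=
    (sum_inv_sq_le_of_lt fun p hp => (Nat.floor_lt hT.le).2 (hPprime p hp).2).trans
      (div_le_div_of_nonneg_left zero_le_two hT (Nat.lt_floor_add_one T).le)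
  calc ∑ m ∈ s, Sᶜ.indicator g m = ∑ m ∈ s.erase 0, Sᶜ.indicator g m :=
        (Finset.sum_erase _ (by simp [apply_zero_of_le_inv hg0 hle, Set.indicator_apply])).symm
    _ ≤ ∑ p ∈ P, ∑ m ∈ s.erase 0 with p ∣ m, Sᶜ.indicator g m :=
        sum_le_sum_sum_filter_dvd (Set.indicator_nonneg fun m _ => hg0 m) hcover
    _ ≤ ∑ p ∈ P, ∑ m ∈ s.erase 0 with p ∣ m, g m := by
        gcongr with p _ m
        exact Set.indicator_le_self' (fun m _ => hg0 m) m
    _ ≤ ∑ p ∈ P, (g p + 4 * ((p : ℝ) ^ 2)⁻¹) * ∑' m, g m :=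
        Finset.sum_le_sum fun p hp => sum_dvd_le hg0 hmul hle hg (hPprime p hp).1 fun m hm =>
          ⟨Finset.ne_of_mem_erase (Finset.mem_filter.1 hm).1, (Finset.mem_filter.1 hm).2⟩
    _ = (∑ p ∈ P, g p + 4 * ∑ p ∈ P, ((p : ℝ) ^ 2)⁻¹) * ∑' m, g m := by
        rw [← Finset.sum_mul, Finset.sum_add_distrib, Finset.mul_sum]
    _ ≤ (primeTail g T + 8 / T) * ∑' m, g m := by
        have := sum_le_primeTail hg0 hprimes hPprime
        gcongr ?_ * _
        · exact tsum_nonneg hg0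
        · linarith [show 4 * (2 / T) = 8 / T by ring]

include hg0 in
lemma ite_sqrt_lt_le_indicator {x δ : ℝ} (hx : 0 < x) (hδ : 0 ≤ δ) (S : Set ℕ) (m : ℕ) :
    (if √x < m then g m else 0) ≤
      x ^ (-(δ / 2)) * S.indicator (fun m => g m * (m : ℝ) ^ δ) m + Sᶜ.indicator g m := by
  by_cases hmS : m ∈ S
  · rw [Set.indicator_of_mem hmS, Set.indicator_of_notMem (not_not.2 hmS), add_zero]
    split_ifs with hm
    · nlinarith [hg0 m, one_le_rpow_neg_mul_rpow_of_sqrt_lt hx hδ hm]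
    · exact mul_nonneg (rpow_nonneg hx.le _) (mul_nonneg (hg0 m) (rpow_nonneg m.cast_nonneg _))
  · rw [Set.indicator_of_notMem hmS, Set.indicator_of_mem hmS, mul_zero, zero_add]
    split_ifs <;> simp [hg0]

include hg0 hg₁ hmul hle hprimes in
lemma tsum_ite_sqrt_lt_le {x T : ℝ} (hx : 0 < x) (hT : exp 8 ≤ T) :
    ∑' m : ℕ, (if √x < m then g m else 0) ≤
      x ^ (-(2 / log T)) * exp (exp 4 * primeTail g 0 + 4 * exp 4 ^ 2) +
        (primeTail g T + 8 / T) * ∑' m, g m := by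
  set S := (⌊T⌋₊ + 1).smoothNumbers
  have hT1 : 1 < T := lt_of_lt_of_le (by linarith [add_one_le_exp (8 : ℝ)]) hT
  have hlogT : 8 ≤ log T := by simpa using log_le_log (exp_pos 8) hT
  have hg := summable_of_le_inv hg0 hg₁ hmul hle hprimes
  obtain ⟨hsumS, hboundS⟩ := summable_and_tsum_smoothNumbers_mul_rpow_le hg0 hg₁ hmul hle hprimes
    (δ := 4 / log T) (by rw [div_le_iff₀ (by linarith)]; linarith) (exp_pos 4).le
    (N := ⌊T⌋₊ + 1) fun p hp => rpow_div_log_le_exp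
      (by exact_mod_cast (Nat.prime_of_mem_primesBelow hp).pos)
      ((Nat.le_floor_iff (by linarith)).1 (Nat.lt_succ_iff.1 (Nat.lt_of_mem_primesBelow hp)))
      hT1 (by norm_num)
  have hsumW : Summable (S.indicator fun m => g m * (m : ℝ) ^ (4 / log T)) :=
    summable_subtype_iff_indicator.1 hsumS
  have hpoint (m : ℕ) : (if √x < m then g m else 0) ≤
      x ^ (-(2 / log T)) * S.indicator (fun m => g m * (m : ℝ) ^ (4 / log T)) m +
        Sᶜ.indicator g m := by
    simpa only [show 4 / log T / 2 = 2 / log T by ring] using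
      ite_sqrt_lt_le_indicator (δ := 4 / log T) hg0 hx (div_nonneg (by norm_num) (by linarith)) S m
  calc ∑' m : ℕ, (if √x < m then g m else 0)
      ≤ ∑' m, (x ^ (-(2 / log T)) * S.indicator (fun m => g m * (m : ℝ) ^ (4 / log T)) m +
          Sᶜ.indicator g m) :=
        Summable.tsum_le_tsum hpoint
          (hg.of_nonneg_of_le (fun m => by split_ifs <;> simp [hg0])
            fun m => by split_ifs <;> simp [hg0])
          ((hsumW.mul_left _).add (hg.indicator _))
    _ = x ^ (-(2 / log T)) * ∑' m : S, g m * (m : ℝ) ^ (4 / log T) +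
          ∑' m, Sᶜ.indicator g m := by
        rw [(hsumW.mul_left _).tsum_add (hg.indicator _), tsum_mul_left, ← _root_.tsum_subtype]
    _ ≤ _ := add_le_add (mul_le_mul_of_nonneg_left hboundS (rpow_nonneg hx.le _))
        (tsum_indicator_compl_smoothNumbers_le hg0 hmul hle hprimes hg (by linarith))

include hg0 hg₁ hmul hle hprimes in
theorem exists_tsum_ite_sqrt_lt_le : ∃ C, 0 < C ∧ ∀ x T : ℝ, 0 < x → exp 8 ≤ T →
    ∑' m : ℕ, (if √x < m then g m else 0) ≤
      C * (x ^ (-(2 / log T)) * log T + primeTail g T + 1 / T) := by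
  set K := exp (exp 4 * primeTail g 0 + 4 * exp 4 ^ 2)
  set G := ∑' m, g m
  have hK : 0 < K := exp_pos _
  have hG : 0 ≤ G := tsum_nonneg hg0
  refine ⟨K + 8 * G, by positivity, fun x T hx hT =>
    (tsum_ite_sqrt_lt_le hg0 hg₁ hmul hle hprimes hx hT).trans ?_⟩
  have hlogT : 1 ≤ log T := by
    linarith [show 8 ≤ log T by simpa using log_le_log (exp_pos 8) hT]
  have hinvT : 0 ≤ 1 / T := one_div_nonneg.2 ((exp_pos 8).le.trans hT)
  have ha : 0 ≤ x ^ (-(2 / log T)) := rpow_nonneg hx.le _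
  have hα : 0 ≤ primeTail g T := by simpa using sum_le_primeTail hg0 hprimes (T := T) (P := ∅)
  nlinarith [mul_nonneg (mul_nonneg hK.le ha) (sub_nonneg.2 hlogT), mul_nonneg hK.le hα,
    mul_nonneg hK.le hinvT, mul_nonneg (mul_nonneg hG ha) (zero_le_one.trans hlogT),
    mul_nonneg hG hα, show 8 / T = 8 * (1 / T) by ring]

end Multiplicative

lemma exp_bounds_of_sixteen_le {ℓ : ℝ} (hℓ : 16 ≤ ℓ) :
    8 ≤ exp ℓ / ℓ ∧ exp (-ℓ) / ℓ + exp (-(exp ℓ / ℓ)) ≤ exp (-(ℓ / 6)) := by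
  have hℓ0 : 0 < ℓ := by linarith
  have hquad := quadratic_le_exp_of_nonneg hℓ0.le
  refine ⟨by rw [le_div_iff₀ hℓ0]; nlinarith, ?_⟩
  have h1 : exp (-ℓ) / ℓ ≤ exp (-(ℓ / 6)) / 2 := by
    rw [div_le_div_iff₀ hℓ0 two_pos]
    nlinarith [exp_pos (-ℓ), exp_le_exp.2 (show -ℓ ≤ -(ℓ / 6) by linarith)]
  have h2 : exp (-(exp ℓ / ℓ)) ≤ exp (-(ℓ / 6)) / 2 := by
    have hq : ℓ / 6 + 1 ≤ exp ℓ / ℓ := by rw [le_div_iff₀ hℓ0]; nlinarith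
    calc exp (-(exp ℓ / ℓ)) ≤ exp (-(ℓ / 6) - 1) := exp_le_exp.2 (by linarith)
      _ = exp (-(ℓ / 6)) / exp 1 := by rw [exp_sub]
      _ ≤ exp (-(ℓ / 6)) / 2 := div_le_div_of_nonneg_left (exp_pos _).le two_pos
          (by linarith [add_one_le_exp (1 : ℝ)])
  linarith

lemma rpow_inv_log_log_bounds {x T : ℝ} (hx : exp (exp 16) ≤ x)
    (hT : T = x ^ (1 / log (log x))) :
    exp 8 ≤ T ∧ x ^ (-(2 / log T)) * log T + 1 / T ≤ 1 / log x ^ ((1 : ℝ) / 6) := by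
  have hx0 : 0 < x := (exp_pos _).trans_le hx
  have hlogx : exp 16 ≤ log x := by simpa using log_le_log (exp_pos _) hx
  set ℓ := log (log x)
  have hℓ : 16 ≤ ℓ := by simpa using log_le_log (exp_pos _) hlogx
  have hL : log x = exp ℓ := (exp_log ((exp_pos _).trans_le hlogx)).symm
  have hlogT : log T = exp ℓ / ℓ := by rw [hT, log_rpow hx0, hL]; ring
  have hTexp : T = exp (exp ℓ / ℓ) := by
    rw [← hlogT, exp_log (by rw [hT]; exact rpow_pos_of_pos hx0 _)]
  have hpow : x ^ (-(2 / log T)) = exp (-(2 * ℓ)) := by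
    rw [rpow_def_of_pos hx0, hL, hlogT]; congr 1; field_simp
  have hroot : log x ^ ((1 : ℝ) / 6) = exp (ℓ / 6) := by rw [hL, ← exp_mul]; ring_nf
  obtain ⟨h8, hsmall⟩ := exp_bounds_of_sixteen_le hℓ
  refine ⟨hTexp ▸ exp_le_exp.2 h8, ?_⟩
  rw [hpow, hlogT, hTexp, hroot, one_div, one_div, ← exp_neg, ← exp_neg]
  convert hsmall using 2
  rw [mul_div_assoc', ← exp_add]
  ring_nf

/-- Tail estimate for `Σ_{m > √x} u_f(m)/m`: for `x ≥ 2` and all sufficiently large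
`T ≥ 2`, the tail is `≪ x^{−2/log T} log T + α_f(T) + 1/T`; in particular, with
`T := x^{1/log₂ x}`, it is `≪ α_f(x^{1/log₂x}) + 1/(log x)^{1/6} + 1/x^c` for some
absolute `c > 0` when `x` is large. -/
theorem uf_tail_estimate :
    ∃ c : ℝ, 0 < c ∧
      ∀ f : ℕ → ℝ, IsAdditive f →
        Summable (fun p : Nat.Primes => if f (p : ℕ) ≠ 0 then (1 : ℝ) / ((p : ℕ) : ℝ) else 0) →
        ∃ C : ℝ, 0 < C ∧ ∃ T₀ : ℝ, 2 ≤ T₀ ∧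
          (∀ x T : ℝ, 2 ≤ x → T₀ ≤ T →
            (∑' m : ℕ, if Real.sqrt x < (m : ℝ) then uf f m / m else 0) ≤
              C * (x ^ (-(2 / Real.log T)) * Real.log T + alphaf f T + 1 / T)) ∧
          ∃ x₀ : ℝ, ∀ x : ℝ, x₀ ≤ x →
            (∑' m : ℕ, if Real.sqrt x < (m : ℝ) then uf f m / m else 0) ≤
              C * (alphaf f (x ^ (1 / Real.log (Real.log x)))
                + 1 / Real.log x ^ ((1:ℝ)/6) + 1 / x ^ c) := by
  refine ⟨1, one_pos, fun f _ hS => ?_⟩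
  have hprimes : Summable fun p : Nat.Primes => uf f p / ((p : ℕ) : ℝ) :=
    hS.congr fun p => by rw [uf_prime f p.2]; split_ifs <;> simp
  obtain ⟨C, hC, hbound⟩ := exists_tsum_ite_sqrt_lt_le (g := fun m => uf f m / m)
    (fun m => div_nonneg (uf_nonneg f m) (Nat.cast_nonneg m)) (by simp [uf])
    (fun h => by simp only [uf_mul f h, Nat.cast_mul, mul_div_mul_comm])
    (fun m => by rw [div_eq_mul_inv]; exact mul_le_of_le_one_left (by positivity) (uf_le_one f m))
    hprimes
  refine ⟨C, hC, exp 8, by linarith [add_one_le_exp (8 : ℝ)],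
    fun x T hx hT => hbound x T (by linarith) hT, exp (exp 16), fun x hx => ?_⟩
  obtain ⟨hT, hsmall⟩ := rpow_inv_log_log_bounds hx rfl
  refine (hbound x _ ((exp_pos _).trans_le hx) hT).trans (mul_le_mul_of_nonneg_left ?_ hC.le)
  have : 0 ≤ 1 / x ^ (1 : ℝ) := one_div_nonneg.2 (rpow_nonneg ((exp_pos _).le.trans hx) _)
  change _ + alphaf f _ + _ ≤ _
  linarith

end
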